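/- Let T ∈ (0,∞] and let (u,p) be a smooth solution of the incompressible Navier–Stokes/Euler equations on [0,T) with μ = 0 (the Euler case), and let X : ℝ³ × [0,T) → ℝ³ be a smooth flow map of u, i.e. ∂ₜX(α,t) = u(t, X(α,t)) and X(α,0) = α for all α ∈ ℝ³, t ∈ [0,T), with X(·,t) a bijection of ℝ³ whose spatial derivative ∇_α X(α,t) is invertible for each t. Then the zero-vorticity set is transported by the flow: for all α ∈ ℝ³ and t ∈ [0,T), ω(t, X(α,t)) = 0 if and only if ω(0, α) = 0; equivalently, Ω_t = X(·,t) '' Ω_0. -/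

import Mathlib

set_option maxHeartbeats 2000000

noncomputable section

open Set Filter Topology
open scoped ENNReal RealInnerProductSpace

abbrev E3 : Type := EuclideanSpace ℝ (Fin 3)

/-- The `i`-th standard basis vector of `ℝ³`. -/
def ee (i : Fin 3) : E3 := EuclideanSpace.single i 1

/-- Partial derivative in the `i`-th coordinate direction. -/
def pd {F : Type*} [NormedAddCommGroup F] [NormedSpace ℝ F]
    (i : Fin 3) (f : E3 → F) (x : E3) : F :=
  fderiv ℝ f x (ee i)

/-- Divergence of a vector field on `ℝ³`. -/
def div3 (v : E3 → E3) (x : E3) : ℝ := ∑ i, pd i v x i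

/-- Componentwise Laplacian of a vector field on `ℝ³`. -/
def lapVec (v : E3 → E3) (x : E3) : E3 := ∑ i, pd i (fun y => pd i v y) x

/-- Laplacian of a scalar function on `ℝ³`. -/
def lapSc (f : E3 → ℝ) (x : E3) : ℝ := ∑ i, pd i (fun y => pd i f y) x

/-- Curl of a vector field on `ℝ³`. -/
def curl3 (v : E3 → E3) (x : E3) : E3 :=
  (WithLp.equiv 2 (Fin 3 → ℝ)).symm
    ![pd 1 v x 2 - pd 2 v x 1, pd 2 v x 0 - pd 0 v x 2, pd 0 v x 1 - pd 1 v x 0]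

/-- Cross product on `ℝ³`. -/
def cross3 (a b : E3) : E3 :=
  (WithLp.equiv 2 (Fin 3 → ℝ)).symm
    (crossProduct ((WithLp.equiv 2 (Fin 3 → ℝ)) a) ((WithLp.equiv 2 (Fin 3 → ℝ)) b))

/-- The time interval `[0, T)`, where `T ∈ (0, ∞]`. -/
def TimeDom (T : ℝ≥0∞) : Set ℝ := {t : ℝ | 0 ≤ t ∧ ENNReal.ofReal t < T}

/-- `(u, p)` is a smooth solution of the incompressible Navier–Stokes (`μ > 0`) / Euler
(`μ = 0`) equations on `ℝ³ × [0, T)`:  `u, p` are smooth in `(t, x)` and satisfy pointwise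
`∂ₜ u + (u·∇)u − μ Δu + ∇p = 0` and `div u = 0`. -/
def IsNSSolution (μ : ℝ) (T : ℝ≥0∞) (u : ℝ → E3 → E3) (p : ℝ → E3 → ℝ) : Prop :=
  ContDiffOn ℝ (⊤ : ℕ∞) (fun q : ℝ × E3 => u q.1 q.2) (TimeDom T ×ˢ (univ : Set E3)) ∧
  ContDiffOn ℝ (⊤ : ℕ∞) (fun q : ℝ × E3 => p q.1 q.2) (TimeDom T ×ˢ (univ : Set E3)) ∧
  (∀ t ∈ TimeDom T, ∀ x : E3,
    deriv (fun s => u s x) t + fderiv ℝ (u t) x (u t x)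
      - μ • lapVec (u t) x + gradient (p t) x = 0) ∧
  (∀ t ∈ TimeDom T, ∀ x : E3, div3 (u t) x = 0)
lemma decompE3 (z : E3) : z = z 0 • ee 0 + z 1 • ee 1 + z 2 • ee 2 := by
  ext i
  fin_cases i <;>
    simp [ee, EuclideanSpace.single_apply, PiLp.add_apply, PiLp.smul_apply]

lemma fderiv_lin_expand (Φ : (ℝ × E3) →L[ℝ] E3) (z : E3) (j : Fin 3) :
    Φ ((0:ℝ), z) j = ∑ k, z k * Φ ((0:ℝ), ee k) j := by
  have h0 : ∀ y : E3, Φ ((0:ℝ), y) = (Φ.comp (ContinuousLinearMap.inr ℝ ℝ E3)) y := by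
    intro y; simp
  simp only [h0]
  conv_lhs => rw [decompE3 z]
  rw [map_add, map_add, map_smul, map_smul, map_smul]
  simp only [Fin.sum_univ_three, PiLp.add_apply, PiLp.smul_apply, smul_eq_mul, ← h0]

lemma comp_toDual_symm (φ : E3 →L[ℝ] ℝ) (j : Fin 3) :
    ((InnerProductSpace.toDual ℝ E3).symm φ) j = φ (ee j) := by
  have h := InnerProductSpace.toDual_symm_apply (𝕜 := ℝ) (E := E3) (y := φ) (x := ee j)
  have h2 : ⟪(InnerProductSpace.toDual ℝ E3).symm φ, ee j⟫
      = ((InnerProductSpace.toDual ℝ E3).symm φ) j := by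
    simpa [ee] using
      EuclideanSpace.inner_single_right (𝕜 := ℝ) j 1 ((InnerProductSpace.toDual ℝ E3).symm φ)
  rw [← h, h2]


lemma momentum_diff
    (F : ℝ × E3 → E3) (P : ℝ × E3 → ℝ) (O : Set (ℝ × E3)) (hO : IsOpen O)
    (hF : ∀ q ∈ O, ContDiffAt ℝ (⊤ : ℕ∞) F q) (hP : ∀ q ∈ O, ContDiffAt ℝ (⊤ : ℕ∞) P q)
    (hmom : ∀ z ∈ O, ∀ j : Fin 3,
      (fderiv ℝ F z ((1:ℝ), (0:E3))) j + (fderiv ℝ F z ((0:ℝ), F z)) j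
        + fderiv ℝ P z ((0:ℝ), ee j) = 0)
    (q : ℝ × E3) (hq : q ∈ O) (i j : Fin 3) :
    fderiv ℝ (fderiv ℝ F) q ((0:ℝ), ee i) ((1:ℝ), (0:E3)) j
      + fderiv ℝ (fderiv ℝ F) q ((0:ℝ), ee i) ((0:ℝ), F q) j
      + fderiv ℝ F q ((0:ℝ), fderiv ℝ F q ((0:ℝ), ee i)) j
      + fderiv ℝ (fderiv ℝ P) q ((0:ℝ), ee i) ((0:ℝ), ee j) = 0 := by
  have hFq := hF q hq
  have hPq := hP q hq
  have hΦdiff : HasFDerivAt (fderiv ℝ F) (fderiv ℝ (fderiv ℝ F) q) q :=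
    (((hFq.fderiv_right (m := (⊤ : ℕ∞)) ((by simp))).differentiableAt (by simp))).hasFDerivAt
  have hFdiff : HasFDerivAt F (fderiv ℝ F q) q :=
    ((hFq.differentiableAt (by simp))).hasFDerivAt
  have hΨPdiff : HasFDerivAt (fderiv ℝ P) (fderiv ℝ (fderiv ℝ P) q) q :=
    (((hPq.fderiv_right (m := (⊤ : ℕ∞)) ((by simp))).differentiableAt (by simp))).hasFDerivAt
  -- term 1
  have h1 : HasFDerivAt (fun z => (fderiv ℝ F z ((1:ℝ), (0:E3))) j)
      ((EuclideanSpace.proj j).comp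
        ((fderiv ℝ F q).comp (0 : (ℝ × E3) →L[ℝ] (ℝ × E3))
          + (fderiv ℝ (fderiv ℝ F) q).flip ((1:ℝ), (0:E3)))) q := by
    exact (EuclideanSpace.proj j).hasFDerivAt.comp q
      (hΦdiff.clm_apply (hasFDerivAt_const ((1:ℝ), (0:E3)) q))
  -- term 2
  have h2 : HasFDerivAt (fun z => (fderiv ℝ F z ((0:ℝ), F z)) j)
      ((EuclideanSpace.proj j).comp
        ((fderiv ℝ F q).comp
            (((0 : (ℝ × E3) →L[ℝ] ℝ)).prod (fderiv ℝ F q))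
          + (fderiv ℝ (fderiv ℝ F) q).flip ((0:ℝ), F q))) q := by
    exact (EuclideanSpace.proj j).hasFDerivAt.comp q
      (hΦdiff.clm_apply (HasFDerivAt.prodMk (hasFDerivAt_const (0:ℝ) q) hFdiff))
  -- term 3
  have h3 : HasFDerivAt (fun z => fderiv ℝ P z ((0:ℝ), ee j))
      ((fderiv ℝ P q).comp (0 : (ℝ × E3) →L[ℝ] (ℝ × E3))
        + (fderiv ℝ (fderiv ℝ P) q).flip ((0:ℝ), ee j)) q :=
    hΨPdiff.clm_apply (hasFDerivAt_const ((0:ℝ), ee j) q)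
  have hsum := (h1.add h2).add h3
  have hzero : fderiv ℝ (fun z => (fderiv ℝ F z ((1:ℝ), (0:E3))) j
      + (fderiv ℝ F z ((0:ℝ), F z)) j + fderiv ℝ P z ((0:ℝ), ee j)) q = 0 := by
    have hev : (fun z => (fderiv ℝ F z ((1:ℝ), (0:E3))) j
        + (fderiv ℝ F z ((0:ℝ), F z)) j + fderiv ℝ P z ((0:ℝ), ee j))
        =ᶠ[𝓝 q] (fun _ => (0:ℝ)) :=
      eventually_of_mem (hO.mem_nhds hq) (fun z hz => hmom z hz j)
    rw [hev.fderiv_eq]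
    exact fderiv_const_apply 0
  have hL := hsum.fderiv
  erw [hzero] at hL
  have := congrArg (fun (L : (ℝ × E3) →L[ℝ] ℝ) => L ((0:ℝ), ee i)) hL.symm
  simp only [ContinuousLinearMap.add_apply, ContinuousLinearMap.comp_apply,
    ContinuousLinearMap.flip_apply, ContinuousLinearMap.prod_apply, map_zero,
    ContinuousLinearMap.zero_apply, map_add, zero_add, PiLp.proj_apply, PiLp.add_apply] at this
  linarith [this]

lemma alg3 (M : Fin 3 → Fin 3 → ℝ) (htr : M 0 0 + M 1 1 + M 2 2 = 0)
    (w : Fin 3 → ℝ) (hw0 : w 0 = M 1 2 - M 2 1) (hw1 : w 1 = M 2 0 - M 0 2)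
    (hw2 : w 2 = M 0 1 - M 1 0) :
    (∀ c a b : Fin 3, (c = 0 ∧ a = 1 ∧ b = 2) ∨ (c = 1 ∧ a = 2 ∧ b = 0) ∨ (c = 2 ∧ a = 0 ∧ b = 1) →
      (∑ k, M b k * M k a) - (∑ k, M a k * M k b)
        = ∑ k, w k * M k c) := by
  intro c a b h
  rcases h with ⟨hc, ha, hb⟩ | ⟨hc, ha, hb⟩ | ⟨hc, ha, hb⟩ <;> subst hc ha hb <;>
    simp only [Fin.sum_univ_three, hw0, hw1, hw2] <;>
    first
    | linear_combination (M 2 1 - M 1 2) * htr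
    | linear_combination (M 0 2 - M 2 0) * htr
    | linear_combination (M 1 0 - M 0 1) * htr

section PDE
variable (F : ℝ × E3 → E3) (P : ℝ × E3 → ℝ) (O : Set (ℝ × E3))

lemma vorticity_pde (hO : IsOpen O)
    (hF : ∀ q ∈ O, ContDiffAt ℝ (⊤ : ℕ∞) F q) (hP : ∀ q ∈ O, ContDiffAt ℝ (⊤ : ℕ∞) P q)
    (hmom : ∀ z ∈ O, ∀ j : Fin 3,
      (fderiv ℝ F z ((1:ℝ), (0:E3))) j + (fderiv ℝ F z ((0:ℝ), F z)) j
        + fderiv ℝ P z ((0:ℝ), ee j) = 0)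
    (hdiv : ∀ z ∈ O, ∑ i, fderiv ℝ F z ((0:ℝ), ee i) i = 0)
    (q : ℝ × E3) (hq : q ∈ O)
    (ω : E3)
    (hω0 : ω 0 = fderiv ℝ F q ((0:ℝ), ee 1) 2 - fderiv ℝ F q ((0:ℝ), ee 2) 1)
    (hω1 : ω 1 = fderiv ℝ F q ((0:ℝ), ee 2) 0 - fderiv ℝ F q ((0:ℝ), ee 0) 2)
    (hω2 : ω 2 = fderiv ℝ F q ((0:ℝ), ee 0) 1 - fderiv ℝ F q ((0:ℝ), ee 1) 0)
    (c a b : Fin 3)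
    (hcab : (c = 0 ∧ a = 1 ∧ b = 2) ∨ (c = 1 ∧ a = 2 ∧ b = 0) ∨ (c = 2 ∧ a = 0 ∧ b = 1)) :
    fderiv ℝ (fderiv ℝ F) q ((1:ℝ), F q) ((0:ℝ), ee a) b
      - fderiv ℝ (fderiv ℝ F) q ((1:ℝ), F q) ((0:ℝ), ee b) a
      = fderiv ℝ F q ((0:ℝ), ω) c := by
  have hsym : IsSymmSndFDerivAt ℝ F q := (hF q hq).isSymmSndFDerivAt (by rw [minSmoothness_of_isRCLikeNormedField]; exact WithTop.coe_le_coe.mpr (le_top : (2 : ℕ∞) ≤ ⊤))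
  have hsymP : IsSymmSndFDerivAt ℝ P q := (hP q hq).isSymmSndFDerivAt (by rw [minSmoothness_of_isRCLikeNormedField]; exact WithTop.coe_le_coe.mpr (le_top : (2 : ℕ∞) ≤ ⊤))
  have hsplit : ((1:ℝ), F q) = ((1:ℝ), (0:E3)) + ((0:ℝ), F q) := by simp
  -- abbreviations
  set Ψ := fderiv ℝ (fderiv ℝ F) q with hΨ
  set Φ := fderiv ℝ F q with hΦ
  -- expand first argument
  have expand : ∀ (a' b' : Fin 3),
      Ψ ((1:ℝ), F q) ((0:ℝ), ee a') b'
        = Ψ ((0:ℝ), ee a') ((1:ℝ), (0:E3)) b' + Ψ ((0:ℝ), ee a') ((0:ℝ), F q) b' := by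
    intro a' b'
    rw [hsplit, map_add]
    rw [ContinuousLinearMap.add_apply]
    rw [hsym.eq ((1:ℝ), (0:E3)) ((0:ℝ), ee a'), hsym.eq ((0:ℝ), F q) ((0:ℝ), ee a')]
    simp [PiLp.add_apply]
    rfl
  have hda := momentum_diff F P O hO hF hP hmom q hq a b
  have hdb := momentum_diff F P O hO hF hP hmom q hq b a
  have hPsym : fderiv ℝ (fderiv ℝ P) q ((0:ℝ), ee a) ((0:ℝ), ee b)
      = fderiv ℝ (fderiv ℝ P) q ((0:ℝ), ee b) ((0:ℝ), ee a) :=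
    hsymP.eq _ _
  have key : Ψ ((1:ℝ), F q) ((0:ℝ), ee a) b - Ψ ((1:ℝ), F q) ((0:ℝ), ee b) a
      = Φ ((0:ℝ), Φ ((0:ℝ), ee b)) a - Φ ((0:ℝ), Φ ((0:ℝ), ee a)) b := by
    rw [expand a b, expand b a]
    rw [← hΨ, ← hΦ] at hda hdb
    linarith [hda, hdb, hPsym]
  rw [key]
  -- now pure algebra
  set M : Fin 3 → Fin 3 → ℝ := fun i j => Φ ((0:ℝ), ee i) j with hM
  have htr : M 0 0 + M 1 1 + M 2 2 = 0 := by
    have := hdiv q hq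
    rw [Fin.sum_univ_three] at this
    exact this
  have h1 : Φ ((0:ℝ), Φ ((0:ℝ), ee b)) a = ∑ k, M b k * M k a := by
    rw [fderiv_lin_expand]
  have h2 : Φ ((0:ℝ), Φ ((0:ℝ), ee a)) b = ∑ k, M a k * M k b := by
    rw [fderiv_lin_expand]
  have h3 : Φ ((0:ℝ), ω) c = ∑ k, ω k * M k c := by
    rw [fderiv_lin_expand]
  rw [h1, h2, h3]
  exact alg3 M htr (fun k => ω k) hω0 hω1 hω2 c a b hcab

end PDE

/-- For a smooth Euler solution (`μ = 0`) with a smooth flow map `X`, the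
zero-vorticity set is transported by the flow: `ω(t, X(α,t)) = 0 ↔ ω(0,α) = 0`; equivalently
`Ω_t = X(·,t) '' Ω_0`. -/
theorem zero_vorticity_set_transported (T : ℝ≥0∞) (hT : 0 < T)
    (u : ℝ → E3 → E3) (p : ℝ → E3 → ℝ)
    (hsol : IsNSSolution 0 T u p)
    (X : E3 → ℝ → E3)
    (hXsmooth : ContDiffOn ℝ (⊤ : ℕ∞) (fun q : E3 × ℝ => X q.1 q.2) ((univ : Set E3) ×ˢ TimeDom T))
    (hX0 : ∀ α : E3, X α 0 = α)
    (hXode : ∀ α : E3, ∀ t ∈ TimeDom T, HasDerivAt (fun s => X α s) (u t (X α t)) t)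
    (hXbij : ∀ t ∈ TimeDom T, Function.Bijective fun α : E3 => X α t)
    (hXinv : ∀ t ∈ TimeDom T, ∀ α : E3, IsUnit (fderiv ℝ (fun a : E3 => X a t) α)) :
    (∀ α : E3, ∀ t ∈ TimeDom T, (curl3 (u t) (X α t) = 0 ↔ curl3 (u 0) α = 0)) ∧
    ∀ t ∈ TimeDom T,
      {x : E3 | curl3 (u t) x = 0} = (fun α : E3 => X α t) '' {x : E3 | curl3 (u 0) x = 0} := by
  obtain ⟨hu_smooth, hp_smooth, hmom, hdiv⟩ := hsol
  set S : Set ℝ := TimeDom T with hSdef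
  set D : Set (ℝ × E3) := S ×ˢ (univ : Set E3) with hDdef
  set F : ℝ × E3 → E3 := fun q => u q.1 q.2 with hFdef
  set P : ℝ × E3 → ℝ := fun q => p q.1 q.2 with hPdef
  have hS0 : (0:ℝ) ∈ S := ⟨le_refl 0, by simpa using hT⟩
  have hIccS : ∀ t ∈ S, Icc (0:ℝ) t ⊆ S := by
    intro t ht s hs
    exact ⟨hs.1, lt_of_le_of_lt (ENNReal.ofReal_le_ofReal hs.2) ht.2⟩
  have hSnhds : ∀ t ∈ S, 0 < t → S ∈ 𝓝 t := by
    intro t ht ht0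
    obtain ⟨r, hr0, htr, hrT⟩ := ENNReal.lt_iff_exists_real_btwn.mp ht.2
    have htr' : t < r := (ENNReal.ofReal_lt_ofReal_iff_of_nonneg ht.1).mp htr
    refine mem_of_superset (Ioo_mem_nhds ht0 htr') ?_
    intro y hy
    refine ⟨hy.1.le, lt_of_lt_of_le ?_ hrT.le⟩
    exact (ENNReal.ofReal_lt_ofReal_iff (ht0.trans htr')).mpr hy.2
  have hSconv : Convex ℝ S :=
    Set.OrdConnected.convex
      ⟨fun x hx y hy z hz => ⟨hx.1.trans hz.1,
        lt_of_le_of_lt (ENNReal.ofReal_le_ofReal hz.2) hy.2⟩⟩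
  obtain ⟨r₀, hr₀0, h0r₀, hr₀T⟩ := ENNReal.lt_iff_exists_real_btwn.mp hT
  have hr₀pos : 0 < r₀ := by
    by_contra h
    push_neg at h
    rw [ENNReal.ofReal_eq_zero.mpr h] at h0r₀
    exact lt_irrefl _ h0r₀
  have hr₀S : r₀ ∈ S := ⟨hr₀0, hr₀T⟩
  have hSintne : (interior S).Nonempty :=
    ⟨r₀, mem_interior_iff_mem_nhds.mpr (hSnhds r₀ hr₀S hr₀pos)⟩
  have hUD : UniqueDiffOn ℝ D :=
    (uniqueDiffOn_convex hSconv hSintne).prod uniqueDiffOn_univ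
  set Phi : ℝ × E3 → (ℝ × E3) →L[ℝ] E3 := fderivWithin ℝ F D with hPhidef
  have hΦcont : ContinuousOn Phi D :=
    hu_smooth.continuousOn_fderivWithin hUD (by simp)
  have hspace : ∀ t ∈ S, ∀ x : E3,
      HasFDerivAt (u t) ((Phi (t,x)).comp (ContinuousLinearMap.inr ℝ ℝ E3)) x := by
    intro t ht x
    have h1 : HasFDerivWithinAt F (Phi (t,x)) D (t,x) :=
      ((hu_smooth.differentiableOn (by simp)) (t,x) ⟨ht, mem_univ x⟩).hasFDerivWithinAt
    have h2 : HasFDerivAt (fun y : E3 => ((t,y) : ℝ × E3))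
        (ContinuousLinearMap.inr ℝ ℝ E3) x := hasFDerivAt_prodMk_right t x
    have h3 : HasFDerivWithinAt (fun y : E3 => F (t, y))
        ((Phi (t,x)).comp (ContinuousLinearMap.inr ℝ ℝ E3)) univ x :=
      h1.comp x h2.hasFDerivWithinAt (fun y _ => ⟨ht, mem_univ _⟩)
    exact hasFDerivWithinAt_univ.mp h3
  have hfd : ∀ t ∈ S, ∀ x : E3,
      fderiv ℝ (u t) x = (Phi (t,x)).comp (ContinuousLinearMap.inr ℝ ℝ E3) :=
    fun t ht x => (hspace t ht x).fderiv
  have hpd : ∀ t ∈ S, ∀ (x : E3) (i : Fin 3), pd i (u t) x = Phi (t,x) ((0:ℝ), ee i) := by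
    intro t ht x i
    rw [pd, hfd t ht x]
    simp
  have hcurlS : ∀ t ∈ S, ∀ x : E3, curl3 (u t) x =
      (WithLp.equiv 2 (Fin 3 → ℝ)).symm
        ![Phi (t,x) ((0:ℝ), ee 1) 2 - Phi (t,x) ((0:ℝ), ee 2) 1,
          Phi (t,x) ((0:ℝ), ee 2) 0 - Phi (t,x) ((0:ℝ), ee 0) 2,
          Phi (t,x) ((0:ℝ), ee 0) 1 - Phi (t,x) ((0:ℝ), ee 1) 0] := by
    intro t ht x
    rw [curl3, hpd t ht, hpd t ht, hpd t ht]
  -- the open interior region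
  set O : Set (ℝ × E3) := (interior S) ×ˢ (univ : Set E3) with hOdef
  have hOopen : IsOpen O := isOpen_interior.prod isOpen_univ
  have hDnhds : ∀ q ∈ O, D ∈ 𝓝 q := by
    intro q hq
    exact prod_mem_nhds (mem_interior_iff_mem_nhds.mp hq.1) univ_mem
  have hmemO : ∀ t ∈ S, 0 < t → ∀ x : E3, ((t, x) : ℝ × E3) ∈ O := by
    intro t ht ht0 x
    exact ⟨mem_interior_iff_mem_nhds.mpr (hSnhds t ht ht0), mem_univ _⟩
  have hΦeq : ∀ q ∈ O, Phi q = fderiv ℝ F q :=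
    fun q hq => fderivWithin_of_mem_nhds (hDnhds q hq)
  have hFC : ∀ q ∈ O, ContDiffAt ℝ (⊤ : ℕ∞) F q := fun q hq => hu_smooth.contDiffAt (hDnhds q hq)
  have hPC : ∀ q ∈ O, ContDiffAt ℝ (⊤ : ℕ∞) P q := fun q hq => hp_smooth.contDiffAt (hDnhds q hq)
  have hSofO : ∀ q : ℝ × E3, q ∈ O → q.1 ∈ S := fun q hq => interior_subset hq.1
  -- momentum in joint form on O
  have hmomO : ∀ z ∈ O, ∀ j : Fin 3,
      (fderiv ℝ F z ((1:ℝ), (0:E3))) j + (fderiv ℝ F z ((0:ℝ), F z)) j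
        + fderiv ℝ P z ((0:ℝ), ee j) = 0 := by
    intro z hz j
    obtain ⟨s, y⟩ := z
    have hsS : s ∈ S := hSofO _ hz
    have hFz : DifferentiableAt ℝ F (s, y) := (hFC _ hz).differentiableAt (by simp)
    have hPz : DifferentiableAt ℝ P (s, y) := (hPC _ hz).differentiableAt (by simp)
    have hmz := hmom s hsS y
    -- time derivative
    have htime : deriv (fun s' => u s' y) s = fderiv ℝ F (s, y) ((1:ℝ), (0:E3)) := by
      have hc : HasDerivAt (fun s' => u s' y) (fderiv ℝ F (s, y) ((1:ℝ), (0:E3))) s := by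
        have hin : HasDerivAt (fun s' : ℝ => ((s', y) : ℝ × E3)) ((1:ℝ), (0:E3)) s :=
          (hasDerivAt_id s).prodMk (hasDerivAt_const s y)
        exact hFz.hasFDerivAt.comp_hasDerivAt s hin
      exact hc.deriv
    -- spatial derivative of u
    have hsp : fderiv ℝ (u s) y (u s y) = fderiv ℝ F (s, y) ((0:ℝ), F (s, y)) := by
      rw [hfd s hsS y, hΦeq _ hz]
      simp
      rfl
    -- gradient
    have hgrad : ∀ k : Fin 3, (gradient (p s) y) k = fderiv ℝ P (s, y) ((0:ℝ), ee k) := by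
      intro k
      have h1 : gradient (p s) y = (InnerProductSpace.toDual ℝ E3).symm (fderiv ℝ (p s) y) := rfl
      have h2 : fderiv ℝ (p s) y = (fderiv ℝ P (s, y)).comp (ContinuousLinearMap.inr ℝ ℝ E3) := by
        have hps : HasFDerivAt (p s)
            ((fderiv ℝ P (s, y)).comp (ContinuousLinearMap.inr ℝ ℝ E3)) y :=
          hPz.hasFDerivAt.comp y (hasFDerivAt_prodMk_right s y)
        exact hps.fderiv
      rw [h1, comp_toDual_symm, h2]
      simp
    have hcomp := congrArg (fun v : E3 => v j) hmz
    simp only [PiLp.add_apply, PiLp.sub_apply, PiLp.smul_apply, zero_smul, smul_eq_mul,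
      zero_mul, sub_zero, PiLp.zero_apply] at hcomp
    rw [htime, hsp, hgrad j] at hcomp
    exact hcomp
  -- divergence in joint form on O
  have hdivO : ∀ z ∈ O, ∑ i, fderiv ℝ F z ((0:ℝ), ee i) i = 0 := by
    intro z hz
    obtain ⟨s, y⟩ := z
    have hsS : s ∈ S := hSofO _ hz
    have hd := hdiv s hsS y
    rw [div3] at hd
    have : ∀ i : Fin 3, pd i (u s) y i = fderiv ℝ F (s, y) ((0:ℝ), ee i) i := by
      intro i
      rw [hpd s hsS y i, hΦeq _ hz]
    rw [Finset.sum_congr rfl (fun i _ => (this i).symm)]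
    exact hd
  have main_iff : ∀ α : E3, ∀ t ∈ S, (curl3 (u t) (X α t) = 0 ↔ curl3 (u 0) α = 0) := by
    intro α t₀ ht₀
    set W : ℝ → E3 := fun s => curl3 (u s) (X α s) with hWdef
    have hW0eq : curl3 (u 0) α = W 0 := by rw [hWdef]; simp only; rw [hX0 α]
    rcases eq_or_lt_of_le ht₀.1 with h0t | h0t
    · rw [← h0t, hX0 α]
    have hγc : ContinuousOn (fun s => ((s, X α s) : ℝ × E3)) S :=
      continuousOn_id.prodMk (fun s hs => ((hXode α s hs).continuousAt).continuousWithinAt)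
    have hmapsD : MapsTo (fun s => ((s, X α s) : ℝ × E3)) S D := fun s hs => ⟨hs, mem_univ _⟩
    have hPhiγ : ContinuousOn (fun s => Phi (s, X α s)) S := hΦcont.comp hγc hmapsD
    have hcompcont : ∀ (a b : Fin 3),
        ContinuousOn (fun s => Phi (s, X α s) ((0:ℝ), ee a) b) S := by
      intro a b
      have h1 : Continuous (fun B : (ℝ × E3) →L[ℝ] E3 => B ((0:ℝ), ee a) b) :=
        (EuclideanSpace.proj b).continuous.comp
          (ContinuousLinearMap.apply ℝ E3 ((0:ℝ), ee a)).continuous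
      exact h1.comp_continuousOn hPhiγ
    have hWcont : ContinuousOn W S := by
      have hg : ContinuousOn (fun s => (WithLp.equiv 2 (Fin 3 → ℝ)).symm
          ![Phi (s, X α s) ((0:ℝ), ee 1) 2 - Phi (s, X α s) ((0:ℝ), ee 2) 1,
            Phi (s, X α s) ((0:ℝ), ee 2) 0 - Phi (s, X α s) ((0:ℝ), ee 0) 2,
            Phi (s, X α s) ((0:ℝ), ee 0) 1 - Phi (s, X α s) ((0:ℝ), ee 1) 0]) S := by
        refine Continuous.comp_continuousOn
          ((PiLp.continuousLinearEquiv 2 ℝ (fun _ : Fin 3 => ℝ)).symm.continuous) ?_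
        apply continuousOn_pi.mpr
        intro i
        fin_cases i <;>
          simp only [Matrix.cons_val_zero, Matrix.cons_val_one, Matrix.head_cons,
            Matrix.cons_val_two, Matrix.tail_cons] <;>
          exact ((hcompcont _ _).sub (hcompcont _ _))
      refine hg.congr ?_
      intro s hs
      exact hcurlS s hs (X α s)
    have hWd : ∀ t ∈ S, 0 < t → HasDerivAt W ((Phi (t, X α t)) ((0:ℝ), W t)) t := by
      intro t ht ht0
      have hqO : ((t, X α t) : ℝ × E3) ∈ O := hmemO t ht ht0 (X α t)
      have hγ : HasDerivAt (fun s => ((s, X α s) : ℝ × E3)) ((1:ℝ), u t (X α t)) t :=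
        (hasDerivAt_id t).prodMk (hXode α t ht)
      have hΦf : HasFDerivAt (fderiv ℝ F) (fderiv ℝ (fderiv ℝ F) (t, X α t)) (t, X α t) :=
        (((hFC _ hqO).fderiv_right (m := (⊤ : ℕ∞)) (by simp)).differentiableAt (by simp)).hasFDerivAt
      have hcomp : HasDerivAt (fun s => fderiv ℝ F (s, X α s))
          (fderiv ℝ (fderiv ℝ F) (t, X α t) ((1:ℝ), u t (X α t))) t :=
        hΦf.comp_hasDerivAt t hγ
      have hcompc : ∀ (a b : Fin 3),
          HasDerivAt (fun s => fderiv ℝ F (s, X α s) ((0:ℝ), ee a) b)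
            (fderiv ℝ (fderiv ℝ F) (t, X α t) ((1:ℝ), u t (X α t)) ((0:ℝ), ee a) b) t := by
        intro a b
        have h1 := (ContinuousLinearMap.apply ℝ E3
          ((0:ℝ), ee a)).hasFDerivAt.comp_hasDerivAt t hcomp
        exact (EuclideanSpace.proj b).hasFDerivAt.comp_hasDerivAt t h1
      set G : Fin 3 → ℝ :=
        ![fderiv ℝ (fderiv ℝ F) (t, X α t) ((1:ℝ), u t (X α t)) ((0:ℝ), ee 1) 2
            - fderiv ℝ (fderiv ℝ F) (t, X α t) ((1:ℝ), u t (X α t)) ((0:ℝ), ee 2) 1,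
          fderiv ℝ (fderiv ℝ F) (t, X α t) ((1:ℝ), u t (X α t)) ((0:ℝ), ee 2) 0
            - fderiv ℝ (fderiv ℝ F) (t, X α t) ((1:ℝ), u t (X α t)) ((0:ℝ), ee 0) 2,
          fderiv ℝ (fderiv ℝ F) (t, X α t) ((1:ℝ), u t (X α t)) ((0:ℝ), ee 0) 1
            - fderiv ℝ (fderiv ℝ F) (t, X α t) ((1:ℝ), u t (X α t)) ((0:ℝ), ee 1) 0] with hGdef
      have hg : HasDerivAt (fun s =>
          ![fderiv ℝ F (s, X α s) ((0:ℝ), ee 1) 2 - fderiv ℝ F (s, X α s) ((0:ℝ), ee 2) 1,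
            fderiv ℝ F (s, X α s) ((0:ℝ), ee 2) 0 - fderiv ℝ F (s, X α s) ((0:ℝ), ee 0) 2,
            fderiv ℝ F (s, X α s) ((0:ℝ), ee 0) 1 - fderiv ℝ F (s, X α s) ((0:ℝ), ee 1) 0])
          G t := by
        apply hasDerivAt_pi.mpr
        intro i
        fin_cases i <;>
          simp only [hGdef, Matrix.cons_val_zero, Matrix.cons_val_one, Matrix.head_cons,
            Matrix.cons_val_two, Matrix.tail_cons] <;>
          exact (hcompc _ _).sub (hcompc _ _)
      have hW' : HasDerivAt (fun s => (WithLp.equiv 2 (Fin 3 → ℝ)).symm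
          ![fderiv ℝ F (s, X α s) ((0:ℝ), ee 1) 2 - fderiv ℝ F (s, X α s) ((0:ℝ), ee 2) 1,
            fderiv ℝ F (s, X α s) ((0:ℝ), ee 2) 0 - fderiv ℝ F (s, X α s) ((0:ℝ), ee 0) 2,
            fderiv ℝ F (s, X α s) ((0:ℝ), ee 0) 1 - fderiv ℝ F (s, X α s) ((0:ℝ), ee 1) 0])
          ((WithLp.equiv 2 (Fin 3 → ℝ)).symm G) t := by
        have h2 := ((PiLp.continuousLinearEquiv 2 ℝ
          (fun _ : Fin 3 => ℝ)).symm : (Fin 3 → ℝ) ≃L[ℝ] E3)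
          |>.toContinuousLinearMap.hasFDerivAt.comp_hasDerivAt t hg
        exact h2
      have hev : W =ᶠ[𝓝 t] (fun s => (WithLp.equiv 2 (Fin 3 → ℝ)).symm
          ![fderiv ℝ F (s, X α s) ((0:ℝ), ee 1) 2 - fderiv ℝ F (s, X α s) ((0:ℝ), ee 2) 1,
            fderiv ℝ F (s, X α s) ((0:ℝ), ee 2) 0 - fderiv ℝ F (s, X α s) ((0:ℝ), ee 0) 2,
            fderiv ℝ F (s, X α s) ((0:ℝ), ee 0) 1 - fderiv ℝ F (s, X α s) ((0:ℝ), ee 1) 0]) := by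
        have hmem : (S ∩ Ioi (0:ℝ)) ∈ 𝓝 t :=
          Filter.inter_mem (hSnhds t ht ht0) (Ioi_mem_nhds ht0)
        refine eventually_of_mem hmem ?_
        intro s hs
        have hsO : ((s, X α s) : ℝ × E3) ∈ O := hmemO s hs.1 hs.2 (X α s)
        simp only [hWdef]
        rw [hcurlS s hs.1 (X α s), hΦeq _ hsO]
      have hWder : HasDerivAt W ((WithLp.equiv 2 (Fin 3 → ℝ)).symm G) t :=
        hW'.congr_of_eventuallyEq hev
      -- identify the derivative using the vorticity PDE
      have hWtc : ∀ k : Fin 3, W t k =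
          ![fderiv ℝ F (t, X α t) ((0:ℝ), ee 1) 2 - fderiv ℝ F (t, X α t) ((0:ℝ), ee 2) 1,
            fderiv ℝ F (t, X α t) ((0:ℝ), ee 2) 0 - fderiv ℝ F (t, X α t) ((0:ℝ), ee 0) 2,
            fderiv ℝ F (t, X α t) ((0:ℝ), ee 0) 1 - fderiv ℝ F (t, X α t) ((0:ℝ), ee 1) 0] k := by
        intro k
        simp only [hWdef]
        rw [hcurlS t ht (X α t), hΦeq _ hqO]
        rfl
      have hpde := vorticity_pde F P O hOopen hFC hPC hmomO hdivO (t, X α t) hqO (W t)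
        (by simpa using hWtc 0) (by simpa using hWtc 1) (by simpa using hWtc 2)
      have hfinal : (WithLp.equiv 2 (Fin 3 → ℝ)).symm G = Phi (t, X α t) ((0:ℝ), W t) := by
        rw [hΦeq _ hqO]
        have hc : ∀ c : Fin 3, ((WithLp.equiv 2 (Fin 3 → ℝ)).symm G) c
            = fderiv ℝ F (t, X α t) ((0:ℝ), W t) c := by
          intro c
          show G c = _
          fin_cases c
          · simpa [hGdef, hFdef] using hpde 0 1 2 (Or.inl ⟨rfl, rfl, rfl⟩)
          · simpa [hGdef, hFdef] using hpde 1 2 0 (Or.inr (Or.inl ⟨rfl, rfl, rfl⟩))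
          · simpa [hGdef, hFdef] using hpde 2 0 1 (Or.inr (Or.inr ⟨rfl, rfl, rfl⟩))
        exact PiLp.ext hc
      exact hfinal ▸ hWder
    obtain ⟨K, hK0, hK⟩ : ∃ K : ℝ, 0 ≤ K ∧
        ∀ s ∈ Icc (0:ℝ) t₀, ∀ y : E3, ‖Phi (s, X α s) ((0:ℝ), y)‖ ≤ K * ‖y‖ := by
      have hsub : Icc (0:ℝ) t₀ ⊆ S := hIccS t₀ ht₀
      have hpost : Continuous (fun B : (ℝ × E3) →L[ℝ] E3 =>
          B.comp (ContinuousLinearMap.inr ℝ ℝ E3)) :=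
        ((ContinuousLinearMap.compL ℝ E3 (ℝ × E3) E3).flip
          (ContinuousLinearMap.inr ℝ ℝ E3)).continuous
      have hcont : ContinuousOn
          (fun s => (Phi (s, X α s)).comp (ContinuousLinearMap.inr ℝ ℝ E3)) (Icc (0:ℝ) t₀) :=
        hpost.comp_continuousOn (hPhiγ.mono hsub)
      obtain ⟨C, hC⟩ := isCompact_Icc.exists_bound_of_continuousOn hcont
      refine ⟨max C 0, le_max_right _ _, ?_⟩
      intro s hs y
      have h1 : Phi (s, X α s) ((0:ℝ), y)
          = (Phi (s, X α s)).comp (ContinuousLinearMap.inr ℝ ℝ E3) y := by simp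
      rw [h1]
      calc ‖(Phi (s, X α s)).comp (ContinuousLinearMap.inr ℝ ℝ E3) y‖
          ≤ ‖(Phi (s, X α s)).comp (ContinuousLinearMap.inr ℝ ℝ E3)‖ * ‖y‖ :=
            ContinuousLinearMap.le_opNorm _ _
        _ ≤ max C 0 * ‖y‖ :=
            mul_le_mul_of_nonneg_right ((hC s hs).trans (le_max_left _ _)) (norm_nonneg _)
    have forward : W 0 = 0 → W t₀ = 0 := by
      intro hW0
      have key : ∀ ε ∈ Ioc (0:ℝ) t₀, ‖W t₀‖ ≤ ‖W ε‖ * Real.exp (K * t₀) := by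
        intro ε hε
        have hIccsub : Icc ε t₀ ⊆ S := fun s hs => hIccS t₀ ht₀ ⟨hε.1.le.trans hs.1, hs.2⟩
        have hb := norm_le_gronwallBound_of_norm_deriv_right_le
          (f := W) (f' := fun s => Phi (s, X α s) ((0:ℝ), W s)) (δ := ‖W ε‖) (K := K)
          (ε := 0) (a := ε) (b := t₀)
          (hWcont.mono hIccsub)
          (fun s hs => ((hWd s (hIccsub ⟨hs.1, hs.2.le⟩)
            (lt_of_lt_of_le hε.1 hs.1)).hasDerivWithinAt))
          le_rfl
          (fun s hs => by
            have := hK s ⟨(hε.1.le.trans hs.1), hs.2.le⟩ (W s)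
            simpa using this)
          t₀ ⟨hε.2, le_refl t₀⟩
        rw [gronwallBound_ε0] at hb
        refine hb.trans ?_
        have hexp : Real.exp (K * (t₀ - ε)) ≤ Real.exp (K * t₀) :=
          Real.exp_le_exp.mpr (by nlinarith [hε.1, hK0])
        exact mul_le_mul_of_nonneg_left hexp (norm_nonneg _)
      have hnebot : (𝓝[Ioc (0:ℝ) t₀] (0:ℝ)).NeBot := by
        refine mem_closure_iff_nhdsWithin_neBot.mp ?_
        rw [closure_Ioc (ne_of_lt h0t)]
        exact ⟨le_refl 0, h0t.le⟩
      have hlim : Tendsto (fun ε => ‖W ε‖ * Real.exp (K * t₀)) (𝓝[Ioc (0:ℝ) t₀] 0)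
          (𝓝 (‖W 0‖ * Real.exp (K * t₀))) := by
        have h1 : ContinuousWithinAt W (Ioc (0:ℝ) t₀) 0 :=
          (hWcont 0 hS0).mono (fun s hs => hIccS t₀ ht₀ ⟨hs.1.le, hs.2⟩)
        exact (h1.norm.tendsto).mul_const _
      have hfin : ‖W t₀‖ ≤ ‖W 0‖ * Real.exp (K * t₀) := by
        refine ge_of_tendsto hlim ?_
        refine eventually_nhdsWithin_of_forall ?_
        intro ε hε
        exact key ε hε
      rw [hW0, norm_zero, zero_mul] at hfin
      exact norm_le_zero_iff.mp hfin
    have backward : W t₀ = 0 → W 0 = 0 := by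
      intro hWt0
      have hVcont : ContinuousOn (fun s => W (t₀ - s)) (Icc (0:ℝ) t₀) := by
        apply hWcont.comp (continuous_const.sub continuous_id).continuousOn
        intro s hs
        exact hIccS t₀ ht₀ ⟨by simp [hs.2], by simp [hs.1]⟩
      have hb := norm_le_gronwallBound_of_norm_deriv_right_le
        (f := fun s => W (t₀ - s))
        (f' := fun s => -(Phi (t₀ - s, X α (t₀ - s)) ((0:ℝ), W (t₀ - s))))
        (δ := ‖W t₀‖) (K := K) (ε := 0) (a := 0) (b := t₀)
        hVcont
        (fun s hs => by
          have h1 : 0 < t₀ - s := sub_pos.mpr hs.2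
          have h2 : t₀ - s ∈ S := hIccS t₀ ht₀ ⟨h1.le, by simp [hs.1]⟩
          have h3 := hWd (t₀ - s) h2 h1
          have hin : HasDerivAt (fun s' : ℝ => t₀ - s') (-1 : ℝ) s := by
            simpa using (hasDerivAt_id s).const_sub t₀
          have h4 := HasDerivAt.scomp s h3 hin
          simp only [neg_one_smul] at h4
          exact h4.hasDerivWithinAt)
        (by simp)
        (fun s hs => by
          have h2 : t₀ - s ∈ Icc (0:ℝ) t₀ := ⟨by simp [hs.2.le], by simp [hs.1]⟩
          have := hK (t₀ - s) h2 (W (t₀ - s))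
          simpa using this)
        t₀ ⟨h0t.le, le_refl t₀⟩
      rw [gronwallBound_ε0, hWt0, norm_zero, zero_mul] at hb
      simp only [sub_self] at hb
      exact norm_le_zero_iff.mp hb
    rw [hW0eq]
    exact ⟨backward, forward⟩
  refine ⟨fun α t ht => main_iff α t ht, ?_⟩
  intro t ht
  ext x
  simp only [mem_setOf_eq, mem_image]
  constructor
  · intro hx
    obtain ⟨α, hα⟩ := (hXbij t ht).2 x
    refine ⟨α, ?_, hα⟩
    have := (main_iff α t ht).mp (by simpa [hα] using hx)
    exact this
  · rintro ⟨α, hα0, rfl⟩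
    exact (main_iff α t ht).mpr hα0
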